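/- arXiv:2011.10092 — 5 statements merged into one kernel-verified Lean document; each statement's English description precedes it below -/
import Mathlib

section
/- Let μ be a finite positive measure on [0,∞) with μ({0}) = 0 and K(t) = ∫₀^∞ e^{-tx} dμ(x). Then for every ω ≠ 0, the improper integral ∫₀^∞ K(t) e^{-itω} dt converges and equals ∫₀^∞ x/(x² + ω²) dμ(x) − i ∫₀^∞ ω/(x² + ω²) dμ(x). -/
/-!
Since `e^{-tx} e^{-itω} = e^{-(x+iω)t}`, Fubini turns the truncated integral `∫₀^A K(t) e^{-itω} dt`
into `∫ (1 - e^{-(x+iω)A}) / (x+iω) dμ(x)`. For `x ≥ 0` the integrand is bounded by `2/|ω|`, and for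
`x > 0`, hence `μ`-a.e. because `μ{0} = 0`, it tends to `1/(x+iω)` as `A → ∞`. Dominated
convergence gives the limit `∫ dμ(x)/(x+iω)`, whose real and imaginary parts are
`∫ x/(x²+ω²) dμ` and `-∫ ω/(x²+ω²) dμ`.
-/

open MeasureTheory Set Filter Topology Complex

lemma ofReal_add_mul_I_ne_zero (x : ℝ) {ω : ℝ} (hω : ω ≠ 0) : (x + ω * I : ℂ) ≠ 0 := by
  simpa [Complex.ext_iff] using fun _ : x = 0 => hω

lemma abs_le_norm_ofReal_add_mul_I (x ω : ℝ) : |ω| ≤ ‖(x + ω * I : ℂ)‖ := by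
  simpa using abs_im_le_norm (x + ω * I : ℂ)

lemma re_inv_ofReal_add_mul_I (x ω : ℝ) : (x + ω * I : ℂ)⁻¹.re = x / (x ^ 2 + ω ^ 2) := by
  simp [inv_re, normSq_apply, sq]

lemma im_inv_ofReal_add_mul_I (x ω : ℝ) : (x + ω * I : ℂ)⁻¹.im = -(ω / (x ^ 2 + ω ^ 2)) := by
  simp [inv_im, normSq_apply, sq, neg_div]

lemma norm_exp_neg_ofReal_add_mul_I_mul (x ω t : ℝ) :
    ‖exp (-(x + ω * I) * t)‖ = Real.exp (-(x * t)) := by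
  simp [norm_exp]

lemma tendsto_exp_neg_ofReal_add_mul_I_mul_atTop {x : ℝ} (hx : 0 < x) (ω : ℝ) :
    Tendsto (fun t : ℝ => exp (-(x + ω * I) * t)) atTop (𝓝 0) := by
  rw [tendsto_zero_iff_norm_tendsto_zero]
  simp only [norm_exp_neg_ofReal_add_mul_I_mul]
  exact Real.tendsto_exp_atBot.comp <|
    tendsto_neg_atTop_atBot.comp (tendsto_id.const_mul_atTop hx)

lemma norm_one_sub_exp_div_ofReal_add_mul_I_le {x ω A : ℝ} (hx : 0 ≤ x) (hω : ω ≠ 0)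
    (hA : 0 ≤ A) :
    ‖(1 - exp (-(x + ω * I) * A)) / (x + ω * I)‖ ≤ 2 / |ω| := by
  have hexp : ‖exp (-(x + ω * I) * A)‖ ≤ 1 := by
    rw [norm_exp_neg_ofReal_add_mul_I_mul, Real.exp_le_one_iff, neg_nonpos]
    positivity
  have hnum : ‖1 - exp (-(x + ω * I) * A)‖ ≤ 2 :=
    calc ‖1 - exp (-(x + ω * I) * A)‖ ≤ ‖(1 : ℂ)‖ + ‖exp (-(x + ω * I) * A)‖ := norm_sub_le _ _
      _ ≤ 2 := by rw [norm_one]; linarith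
  rw [norm_div]
  exact div_le_div₀ zero_le_two hnum (abs_pos.2 hω) (abs_le_norm_ofReal_add_mul_I x ω)

lemma ofReal_exp_neg_mul_mul_exp_neg_I_mul (x ω t : ℝ) :
    (Real.exp (-t * x) : ℂ) * exp (-I * t * ω) = exp (-(x + ω * I) * t) := by
  rw [ofReal_exp, ← exp_add]
  congr 1
  push_cast
  ring

lemma integral_exp_neg_ofReal_add_mul_I_mul (x : ℝ) {ω : ℝ} (hω : ω ≠ 0) (A : ℝ) :
    ∫ t in (0 : ℝ)..A, exp (-(x + ω * I) * t) = (1 - exp (-(x + ω * I) * A)) / (x + ω * I) := by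
  rw [integral_exp_mul_complex (neg_ne_zero.2 (ofReal_add_mul_I_ne_zero x hω)), ofReal_zero,
    mul_zero, exp_zero, div_neg, ← neg_div, neg_sub]

section

variable {ν : Measure ℝ} [IsFiniteMeasure ν] {ω : ℝ}

lemma integrable_inv_ofReal_add_mul_I (hω : ω ≠ 0) :
    Integrable (fun x : ℝ => (x + ω * I : ℂ)⁻¹) ν := by
  refine Integrable.mono' (integrable_const |ω|⁻¹) ?_ (ae_of_all _ fun x => ?_)
  · exact (Continuous.inv₀ (by fun_prop) (ofReal_add_mul_I_ne_zero · hω)).aestronglyMeasurable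
  · rw [norm_inv]
    exact inv_anti₀ (abs_pos.2 hω) (abs_le_norm_ofReal_add_mul_I x ω)

theorem integral_inv_ofReal_add_mul_I (hω : ω ≠ 0) :
    ∫ x, (x + ω * I : ℂ)⁻¹ ∂ν
      = ((∫ x, x / (x ^ 2 + ω ^ 2) ∂ν : ℝ) : ℂ) - I * ((∫ x, ω / (x ^ 2 + ω ^ 2) ∂ν : ℝ) : ℂ) := by
  have hint := integrable_inv_ofReal_add_mul_I (ν := ν) hω
  apply Complex.ext
  · have := integral_re hint
    simp only [RCLike.re_to_complex, re_inv_ofReal_add_mul_I] at this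
    simp [← this]
  · have := integral_im hint
    simp only [RCLike.im_to_complex, im_inv_ofReal_add_mul_I, integral_neg] at this
    simp [← this]

theorem intervalIntegral_integral_exp_neg_ofReal_add_mul_I_mul (hν : ∀ᵐ x ∂ν, 0 ≤ x)
    (hω : ω ≠ 0) {A : ℝ} (hA : 0 ≤ A) :
    ∫ t in (0 : ℝ)..A, ∫ x, exp (-(x + ω * I) * t) ∂ν
      = ∫ x, (1 - exp (-(x + ω * I) * A)) / (x + ω * I) ∂ν := by
  have hint : Integrable (Function.uncurry fun (t x : ℝ) => exp (-(x + ω * I) * t))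
      ((volume.restrict (uIoc 0 A)).prod ν) := by
    rw [uIoc_of_le hA]
    refine Integrable.mono' (integrable_const (1 : ℝ)) (by fun_prop) ?_
    filter_upwards [Measure.quasiMeasurePreserving_fst.tendsto_ae.eventually
        (ae_restrict_mem measurableSet_Ioc),
      Measure.quasiMeasurePreserving_snd.tendsto_ae.eventually hν] with p ht hx
    rw [Function.uncurry_apply_pair, norm_exp_neg_ofReal_add_mul_I_mul, Real.exp_le_one_iff,
      neg_nonpos]
    exact mul_nonneg hx ht.1.le
  rw [intervalIntegral_integral_swap hint]
  exact integral_congr_ae (ae_of_all _ fun x => integral_exp_neg_ofReal_add_mul_I_mul x hω A)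

theorem tendsto_integral_one_sub_exp_div_ofReal_add_mul_I (hν : ∀ᵐ x ∂ν, 0 < x) (hω : ω ≠ 0) :
    Tendsto (fun A : ℝ => ∫ x, (1 - exp (-(x + ω * I) * A)) / (x + ω * I) ∂ν) atTop
      (𝓝 (∫ x, (x + ω * I : ℂ)⁻¹ ∂ν)) := by
  refine tendsto_integral_filter_of_dominated_convergence (fun _ => 2 / |ω|)
    (Eventually.of_forall fun A => ?_) ?_ (integrable_const _) ?_
  · exact (Continuous.div (by fun_prop) (by fun_prop)
      (ofReal_add_mul_I_ne_zero · hω)).aestronglyMeasurable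
  · filter_upwards [eventually_ge_atTop 0] with A hA
    filter_upwards [hν] with x hx
    exact norm_one_sub_exp_div_ofReal_add_mul_I_le hx.le hω hA
  · filter_upwards [hν] with x hx
    simpa using ((tendsto_exp_neg_ofReal_add_mul_I_mul_atTop hx ω).const_sub 1).div_const
      (x + ω * I : ℂ)

end

lemma ae_restrict_Ici_lt_of_measure_singleton_eq_zero {μ : Measure ℝ} {a : ℝ} (ha : μ {a} = 0) :
    ∀ᵐ x ∂μ.restrict (Ici a), a < x := by
  filter_upwards [ae_restrict_mem measurableSet_Ici,
    ae_restrict_of_ae (measure_eq_zero_iff_ae_notMem.1 ha)] with x hx hxa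
  exact lt_of_le_of_ne hx (Ne.symm hxa)

/-- Fourier transform of a bounded completely monotone kernel: if `μ` is a finite
positive measure on `[0,∞)` with `μ({0}) = 0` and `K(t) = ∫₀^∞ e^{-t x} dμ(x)`,
then for every `ω ≠ 0` the improper integral `∫₀^∞ K(t) e^{-i t ω} dt` converges
and equals `∫₀^∞ x/(x²+ω²) dμ(x) − i ∫₀^∞ ω/(x²+ω²) dμ(x)`. -/
theorem fourier_transform_of_completely_monotone
    (μ : Measure ℝ) [IsFiniteMeasure μ] (hzero : μ {0} = 0) (K : ℝ → ℝ)
    (hK : ∀ t : ℝ, 0 ≤ t → K t = ∫ x in Ici 0, Real.exp (-t * x) ∂μ)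
    (ω : ℝ) (hω : ω ≠ 0) :
    Tendsto
      (fun A : ℝ => ∫ t in (0:ℝ)..A, (K t : ℂ) * Complex.exp (-Complex.I * t * ω))
      atTop
      (nhds
        (((∫ x in Ici 0, x / (x ^ 2 + ω ^ 2) ∂μ : ℝ) : ℂ)
          - Complex.I * ((∫ x in Ici 0, ω / (x ^ 2 + ω ^ 2) ∂μ : ℝ) : ℂ))) := by
  have hpos := ae_restrict_Ici_lt_of_measure_singleton_eq_zero hzero
  rw [← integral_inv_ofReal_add_mul_I hω]
  refine (tendsto_integral_one_sub_exp_div_ofReal_add_mul_I hpos hω).congr' ?_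
  filter_upwards [eventually_ge_atTop 0] with A hA
  rw [← intervalIntegral_integral_exp_neg_ofReal_add_mul_I_mul (hpos.mono fun _ => le_of_lt)
    hω hA]
  refine intervalIntegral.integral_congr fun t ht => ?_
  rw [uIcc_of_le hA] at ht
  simp only [hK t ht.1, ← integral_complex_ofReal, ← integral_mul_const,
    ofReal_exp_neg_mul_mul_exp_neg_I_mul]
end

section
/- Let μ be a nonzero finite positive measure on [0,∞), let α_k ↑ ∞, and for large k let ω_k > 0 be the unique solution of ω_k = α_k · K_sin(ω_k), where K_sin(ω) = ∫₀^∞ ω/(x²+ω²) dμ(x). Then ω_k² / α_k → μ([0,∞)) as k → ∞. -/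
/-!
Write `ν` for `μ` restricted to `[0, ∞)`. Dividing `ω = a K(ω)` by `ω` gives
`∫ dν(x) / (x² + ω²) = 1 / a`. The left side is positive and decreasing in `ω > 0`, so `1 / a → 0`
forces `ω → ∞`. Then `ω² / a = ∫ ω² / (x² + ω²) dν(x) → ν(ℝ)` by dominated convergence.
-/

open MeasureTheory Set Filter Topology

section PoissonKernel

variable {ν : Measure ℝ}

lemma integral_div_sq_add_sq_eq_mul (c w : ℝ) :
    ∫ x, c / (x ^ 2 + w ^ 2) ∂ν = c * ∫ x, 1 / (x ^ 2 + w ^ 2) ∂ν := by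
  simp_rw [div_eq_mul_one_div c]
  exact integral_const_mul c _

variable [IsFiniteMeasure ν]

lemma integrable_one_div_sq_add_sq {w : ℝ} (hw : w ≠ 0) :
    Integrable (fun x => 1 / (x ^ 2 + w ^ 2)) ν := by
  refine Integrable.of_bound (Measurable.aestronglyMeasurable (by fun_prop)) (1 / w ^ 2)
    (ae_of_all _ fun x => ?_)
  rw [Real.norm_of_nonneg (by positivity)]
  gcongr
  nlinarith [sq_nonneg x]

lemma integral_one_div_sq_add_sq_pos (hν : ν ≠ 0) {w : ℝ} (hw : w ≠ 0) :
    0 < ∫ x, 1 / (x ^ 2 + w ^ 2) ∂ν := by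
  rw [integral_pos_iff_support_of_nonneg (fun x => by positivity)
    (integrable_one_div_sq_add_sq hw), Function.support_eq_univ fun x => by positivity]
  exact Measure.measure_univ_pos.2 hν

lemma integral_one_div_sq_add_sq_antitoneOn :
    AntitoneOn (fun w => ∫ x, 1 / (x ^ 2 + w ^ 2) ∂ν) (Ioi 0) := by
  intro w (hw : 0 < w) B (hB : 0 < B) hwB
  refine integral_mono (integrable_one_div_sq_add_sq (ne_of_gt hB))
    (integrable_one_div_sq_add_sq (ne_of_gt hw)) fun x => ?_
  dsimp only
  gcongr

lemma tendsto_atTop_of_tendsto_integral_one_div_sq_add_sq {ι : Type*} {l : Filter ι}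
    (hν : ν ≠ 0) {ω : ι → ℝ} (hpos : ∀ᶠ i in l, 0 < ω i)
    (h : Tendsto (fun i => ∫ x, 1 / (x ^ 2 + ω i ^ 2) ∂ν) l (𝓝 0)) :
    Tendsto ω l atTop := by
  refine tendsto_atTop.2 fun B => ?_
  set B' := max B 1
  have hB' : 0 < B' := lt_max_of_lt_right one_pos
  have hc := integral_one_div_sq_add_sq_pos hν (ne_of_gt hB')
  filter_upwards [hpos, h.eventually (gt_mem_nhds hc)] with i hi hlt
  by_contra! hiB
  have hle := integral_one_div_sq_add_sq_antitoneOn (ν := ν) (mem_Ioi.2 hi) (mem_Ioi.2 hB')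
    (hiB.le.trans (le_max_left B 1))
  exact (lt_of_lt_of_le hlt hle).false

lemma tendsto_sq_div_sq_add_sq (x : ℝ) :
    Tendsto (fun w : ℝ => w ^ 2 / (x ^ 2 + w ^ 2)) atTop (𝓝 1) := by
  have hsmall : Tendsto (fun w : ℝ => x ^ 2 / (x ^ 2 + w ^ 2)) atTop (𝓝 0) :=
    tendsto_const_nhds.div_atTop
      (tendsto_atTop_add_const_left _ _ (tendsto_pow_atTop two_ne_zero))
  have hsub : Tendsto (fun w : ℝ => 1 - x ^ 2 / (x ^ 2 + w ^ 2)) atTop (𝓝 1) := by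
    simpa using tendsto_const_nhds.sub hsmall
  refine hsub.congr' ?_
  filter_upwards [eventually_ne_atTop 0] with w hw
  field_simp
  ring

lemma tendsto_integral_sq_div_sq_add_sq :
    Tendsto (fun w => ∫ x, w ^ 2 / (x ^ 2 + w ^ 2) ∂ν) atTop (𝓝 (ν.real univ)) := by
  have hint := tendsto_integral_filter_of_dominated_convergence (μ := ν) (fun _ => (1 : ℝ))
    (Eventually.of_forall fun w => Measurable.aestronglyMeasurable (by fun_prop))
    (Eventually.of_forall fun w => ae_of_all _ fun x => by
      rw [Real.norm_of_nonneg (by positivity)]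
      exact div_le_one_of_le₀ (by nlinarith [sq_nonneg x]) (by positivity))
    (integrable_const 1) (ae_of_all _ tendsto_sq_div_sq_add_sq)
  simpa [integral_const] using hint

end PoissonKernel

theorem omega_sq_div_alpha_tendsto_general
    (μ : Measure ℝ) [IsFiniteMeasure μ] (hμ : μ (Ici 0) ≠ 0)
    (Ksin : ℝ → ℝ)
    (hKsin : ∀ ω : ℝ, 0 < ω → Ksin ω = ∫ x in Ici 0, ω / (x ^ 2 + ω ^ 2) ∂μ)
    (a : ℕ → ℝ)
    (hatop : Tendsto a atTop atTop)
    (ω : ℕ → ℝ)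
    (hω : ∀ᶠ k in atTop, 0 < ω k ∧ ω k = a k * Ksin (ω k)) :
    Tendsto (fun k => (ω k) ^ 2 / a k) atTop (nhds (μ (Ici 0)).toReal) := by
  set ν := μ.restrict (Ici 0)
  have hν : ν ≠ 0 := by simpa [ν] using hμ
  have hsolve : ∀ᶠ k in atTop, 0 < ω k ∧ ∫ x, 1 / (x ^ 2 + ω k ^ 2) ∂ν = (a k)⁻¹ := by
    filter_upwards [hω] with k ⟨hpos, heq⟩
    rw [hKsin _ hpos, integral_div_sq_add_sq_eq_mul] at heq
    refine ⟨hpos, eq_inv_of_mul_eq_one_right (mul_left_cancel₀ hpos.ne' ?_)⟩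
    linear_combination heq.symm
  have htop : Tendsto ω atTop atTop :=
    tendsto_atTop_of_tendsto_integral_one_div_sq_add_sq hν (hsolve.mono fun k hk => hk.1)
      ((tendsto_inv_atTop_zero.comp hatop).congr' (hsolve.mono fun k hk => hk.2.symm))
  have hlim := (tendsto_integral_sq_div_sq_add_sq (ν := ν)).comp htop
  rw [measureReal_restrict_apply_univ] at hlim
  refine hlim.congr' (hsolve.mono fun k hk => ?_)
  rw [Function.comp_apply, integral_div_sq_add_sq_eq_mul, hk.2]
  exact (div_eq_mul_inv _ _).symm

/-- If `α_k ↑ ∞` and, for all large `k`, `ω_k > 0` solves `ω_k = α_k K_sin(ω_k)`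
where `K_sin(ω) = ∫₀^∞ ω/(x²+ω²) dμ(x)` for a nonzero finite positive measure `μ`
on `[0,∞)`, then `ω_k²/α_k → μ([0,∞))` as `k → ∞`. -/
theorem omega_sq_div_alpha_tendsto
    (μ : Measure ℝ) [IsFiniteMeasure μ] (hμ : μ (Ici 0) ≠ 0)
    (Ksin : ℝ → ℝ)
    (hKsin : ∀ ω : ℝ, 0 < ω → Ksin ω = ∫ x in Ici 0, ω / (x ^ 2 + ω ^ 2) ∂μ)
    (a : ℕ → ℝ) (ha0 : ∀ k, 0 < a k) (hamono : Monotone a)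
    (hatop : Tendsto a atTop atTop)
    (ω : ℕ → ℝ)
    (hω : ∀ᶠ k in atTop, 0 < ω k ∧ ω k = a k * Ksin (ω k)) :
    Tendsto (fun k => (ω k) ^ 2 / a k) atTop (nhds (μ (Ici 0)).toReal) :=
  omega_sq_div_alpha_tendsto_general μ hμ Ksin hKsin a hatop ω hω
end

section
/- Let μ be a nonzero finite positive measure on [0,∞), α > 0, and suppose ω₀ > 1 satisfies ω₀ = α · K_sin(ω₀), where K_sin(ω) = ∫₀^∞ ω/(x²+ω²) dμ(x). Then with c = K_sin(1)/(4 μ([0,∞))) > 0, for every q ∈ (0,1) and every ω ∈ [ω₀ − ω₀^q, ω₀ + ω₀^q] with ω > 0, one has |α·K_sin(ω)/ω − 1| ≥ (c/ω₀)|ω − ω₀|. -/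
open MeasureTheory Set

/-!
Write `K_sin(ω) = ω I(ω)` with `I(ω) = ∫ (x² + ω²)⁻¹ dμ`, so the root equation reads `α I(ω₀) = 1`
and `α K_sin(ω)/ω - 1 = α (I(ω) - I(ω₀)) = α (ω₀² - ω²) J` with
`J = ∫ (x² + ω²)⁻¹ (x² + ω₀²)⁻¹ dμ`. For `ω ≤ 2ω₀` we have `x² + ω² ≤ 4 (x² + ω₀²)`, hence
`J ≥ Q/4` with `Q = ∫ (x² + ω₀²)⁻² dμ`, and `|ω₀² - ω²| ≥ ω₀ |ω - ω₀|`. It remains to compare `Q`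
with `K_sin(1) = I(1)`: since `ω₀ ≥ 1`, `I(1) ≤ ω₀² I(ω₀) = ω₀² α I(ω₀)²`, and Cauchy–Schwarz
gives `I(ω₀)² ≤ μ([0,∞)) Q`.
-/

section CauchySchwarz

variable {X : Type*} [MeasurableSpace X] {ν : Measure X} [IsFiniteMeasure ν]

theorem sq_integral_le_measureReal_univ_mul_integral_sq {f : X → ℝ} (hf : Integrable f ν)
    (hf2 : Integrable (fun x ↦ f x ^ 2) ν) :
    (∫ x, f x ∂ν) ^ 2 ≤ ν.real univ * ∫ x, f x ^ 2 ∂ν := by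
  rcases eq_zero_or_neZero ν with rfl | hν
  · simp
  have hM : 0 < ν.real univ := measureReal_univ_pos
  have hjensen := (even_two.convexOn_pow (𝕜 := ℝ)).map_average_le (continuous_pow 2).continuousOn
    isClosed_univ (ae_of_all _ fun _ ↦ mem_univ _) hf hf2
  simp only [average_eq, smul_eq_mul] at hjensen
  rw [mul_pow, sq, mul_assoc, mul_le_mul_iff_right₀ (inv_pos.2 hM), inv_mul_le_iff₀ hM] at hjensen
  exact hjensen

end CauchySchwarz

noncomputable def invSqIntegral (ν : Measure ℝ) (t : ℝ) : ℝ := ∫ x, (x ^ 2 + t ^ 2)⁻¹ ∂ν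

section invSqIntegral

variable {ν : Measure ℝ} [IsFiniteMeasure ν] {s t : ℝ}

theorem integrable_inv_sq_add_sq (ht : t ≠ 0) : Integrable (fun x ↦ (x ^ 2 + t ^ 2)⁻¹) ν :=
  Integrable.of_bound (by fun_prop) (t ^ 2)⁻¹ <| ae_of_all _ fun x ↦ by
    rw [Real.norm_of_nonneg (by positivity)]
    exact inv_anti₀ (by positivity) (by linarith [sq_nonneg x])

theorem integrable_inv_sq_add_sq_mul (hs : s ≠ 0) (ht : t ≠ 0) :
    Integrable (fun x ↦ (x ^ 2 + s ^ 2)⁻¹ * (x ^ 2 + t ^ 2)⁻¹) ν :=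
  (integrable_inv_sq_add_sq ht).bdd_mul (by fun_prop) (c := (s ^ 2)⁻¹) <| ae_of_all _ fun x ↦ by
    rw [Real.norm_of_nonneg (by positivity)]
    exact inv_anti₀ (by positivity) (by linarith [sq_nonneg x])

theorem invSqIntegral_pos (hν : ν ≠ 0) (ht : t ≠ 0) : 0 < invSqIntegral ν t := by
  have hsupp : Function.support (fun x : ℝ ↦ (x ^ 2 + t ^ 2)⁻¹) = univ :=
    Function.support_eq_univ fun x ↦ by positivity
  rw [invSqIntegral, integral_pos_iff_support_of_nonneg (fun x ↦ by positivity)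
    (integrable_inv_sq_add_sq ht), hsupp]
  exact Measure.measure_univ_pos.2 hν

theorem invSqIntegral_sub (hs : s ≠ 0) (ht : t ≠ 0) :
    invSqIntegral ν s - invSqIntegral ν t =
      (t ^ 2 - s ^ 2) * ∫ x, (x ^ 2 + s ^ 2)⁻¹ * (x ^ 2 + t ^ 2)⁻¹ ∂ν := by
  rw [invSqIntegral, invSqIntegral, ← integral_sub (integrable_inv_sq_add_sq hs)
    (integrable_inv_sq_add_sq ht), ← integral_const_mul]
  congr 1 with x
  have : x ^ 2 + s ^ 2 ≠ 0 := by positivity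
  have : x ^ 2 + t ^ 2 ≠ 0 := by positivity
  field_simp
  ring

theorem sq_mul_invSqIntegral_le (hs : s ≠ 0) (hst : s ^ 2 ≤ t ^ 2) :
    s ^ 2 * invSqIntegral ν s ≤ t ^ 2 * invSqIntegral ν t := by
  have ht : t ≠ 0 := by
    rintro rfl
    exact hs (pow_eq_zero_iff two_ne_zero |>.1 (by linarith [sq_nonneg s]))
  rw [invSqIntegral, invSqIntegral, ← integral_const_mul, ← integral_const_mul]
  refine integral_mono ((integrable_inv_sq_add_sq hs).const_mul _)
    ((integrable_inv_sq_add_sq ht).const_mul _) fun x ↦ ?_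
  rw [← div_eq_mul_inv, ← div_eq_mul_inv, div_le_div_iff₀ (by positivity) (by positivity)]
  nlinarith [mul_le_mul_of_nonneg_left hst (sq_nonneg x)]

theorem integral_inv_sq_add_sq_sq_le (hs : s ≠ 0) (ht : t ≠ 0) (hst : s ^ 2 ≤ 4 * t ^ 2) :
    (∫ x, ((x ^ 2 + t ^ 2)⁻¹) ^ 2 ∂ν) / 4 ≤ ∫ x, (x ^ 2 + s ^ 2)⁻¹ * (x ^ 2 + t ^ 2)⁻¹ ∂ν := by
  rw [← integral_div]
  refine integral_mono (by simpa only [sq] using (integrable_inv_sq_add_sq_mul ht ht).div_const 4)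
    (integrable_inv_sq_add_sq_mul hs ht) fun x ↦ ?_
  have : (4 * (x ^ 2 + t ^ 2))⁻¹ ≤ (x ^ 2 + s ^ 2)⁻¹ :=
    inv_anti₀ (by positivity) (by linarith [sq_nonneg x])
  calc ((x ^ 2 + t ^ 2)⁻¹) ^ 2 / 4
      = (4 * (x ^ 2 + t ^ 2))⁻¹ * (x ^ 2 + t ^ 2)⁻¹ := by rw [mul_inv]; ring
    _ ≤ (x ^ 2 + s ^ 2)⁻¹ * (x ^ 2 + t ^ 2)⁻¹ := by gcongr

end invSqIntegral

theorem le_abs_mul_invSqIntegral_sub_one {ν : Measure ℝ} [IsFiniteMeasure ν] {α ω₀ ω : ℝ}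
    (hω₀ : 1 ≤ ω₀) (hroot : α * invSqIntegral ν ω₀ = 1) (hω : 0 < ω) (hω_le : ω ≤ 2 * ω₀) :
    invSqIntegral ν 1 / (4 * ν.real univ * ω₀) * |ω - ω₀| ≤ |α * invSqIntegral ν ω - 1| := by
  have hω₀' : ω₀ ≠ 0 := by positivity
  set Q := ∫ x, ((x ^ 2 + ω₀ ^ 2)⁻¹) ^ 2 ∂ν
  set J := ∫ x, (x ^ 2 + ω ^ 2)⁻¹ * (x ^ 2 + ω₀ ^ 2)⁻¹ ∂ν
  have hQJ : Q / 4 ≤ J := integral_inv_sq_add_sq_sq_le hω.ne' hω₀' (by nlinarith)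
  have hJ : 0 ≤ J := integral_nonneg fun x ↦ by positivity
  have hCS : invSqIntegral ν ω₀ ^ 2 ≤ ν.real univ * Q :=
    sq_integral_le_measureReal_univ_mul_integral_sq (integrable_inv_sq_add_sq hω₀')
      (by simpa only [sq] using integrable_inv_sq_add_sq_mul hω₀' hω₀')
  have hI1 : invSqIntegral ν 1 ≤ |α| * ω₀ * Q / 4 * (4 * ν.real univ * ω₀) :=
    calc invSqIntegral ν 1 = 1 ^ 2 * invSqIntegral ν 1 := by rw [one_pow, one_mul]
      _ ≤ ω₀ ^ 2 * invSqIntegral ν ω₀ := sq_mul_invSqIntegral_le one_ne_zero (by nlinarith)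
      _ = ω₀ ^ 2 * (α * invSqIntegral ν ω₀ ^ 2) := by
        rw [pow_two (invSqIntegral ν ω₀), ← mul_assoc α, hroot, one_mul]
      _ ≤ ω₀ ^ 2 * (|α| * (ν.real univ * Q)) := by gcongr; exact le_abs_self α
      _ = |α| * ω₀ * Q / 4 * (4 * ν.real univ * ω₀) := by ring
  have hdist : ω₀ * |ω - ω₀| ≤ |ω₀ ^ 2 - ω ^ 2| := by
    rw [show ω₀ ^ 2 - ω ^ 2 = (ω₀ + ω) * (ω₀ - ω) by ring, abs_mul, abs_sub_comm,
      abs_of_pos (by positivity : 0 < ω₀ + ω)]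
    gcongr
    linarith
  calc invSqIntegral ν 1 / (4 * ν.real univ * ω₀) * |ω - ω₀|
      ≤ |α| * ω₀ * Q / 4 * |ω - ω₀| :=
        mul_le_mul_of_nonneg_right (div_le_of_le_mul₀ (by positivity) (by positivity) hI1)
          (abs_nonneg _)
    _ = |α| * (ω₀ * |ω - ω₀|) * (Q / 4) := by ring
    _ ≤ |α| * |ω₀ ^ 2 - ω ^ 2| * J := by gcongr
    _ = |α * invSqIntegral ν ω - 1| := by
        rw [← hroot, ← mul_sub, invSqIntegral_sub hω.ne' hω₀', abs_mul, abs_mul, abs_of_nonneg hJ]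
        ring

theorem lower_bound_near_resonance_general
    (μ : Measure ℝ) [IsFiniteMeasure μ] (hμ : μ (Ici 0) ≠ 0)
    (Ksin : ℝ → ℝ)
    (hKsin : ∀ ω : ℝ, 0 < ω → Ksin ω = ∫ x in Ici 0, ω / (x ^ 2 + ω ^ 2) ∂μ)
    (α : ℝ) (ω₀ : ℝ) (hω₀ : 1 < ω₀)
    (hroot : ω₀ = α * Ksin ω₀)
    (c : ℝ) (hc : c = Ksin 1 / (4 * (μ (Ici 0)).toReal)) :
    0 < c ∧
      ∀ q ∈ Set.Ioo (0:ℝ) 1, ∀ ω : ℝ,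
        ω ∈ Set.Icc (ω₀ - ω₀ ^ q) (ω₀ + ω₀ ^ q) → 0 < ω →
          (c / ω₀) * |ω - ω₀| ≤ |α * Ksin ω / ω - 1| := by
  set ν := μ.restrict (Ici 0)
  have hν_univ : ν.real univ = (μ (Ici 0)).toReal := by simp [ν, measureReal_def]
  have hK (t : ℝ) (ht : 0 < t) : Ksin t = t * invSqIntegral ν t := by
    simp only [hKsin t ht, invSqIntegral, ← integral_const_mul, div_eq_mul_inv]
  have hω₀_pos : 0 < ω₀ := one_pos.trans hω₀
  have hc' : c = invSqIntegral ν 1 / (4 * ν.real univ) := by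
    rw [hc, hK 1 one_pos, one_mul, hν_univ]
  refine ⟨?_, fun q hq ω hω hω_pos ↦ ?_⟩
  · rw [hc', hν_univ]
    exact div_pos (invSqIntegral_pos (by simpa [ν] using hμ) one_ne_zero)
      (mul_pos four_pos (ENNReal.toReal_pos hμ (measure_ne_top μ _)))
  have hroot' : α * invSqIntegral ν ω₀ = 1 :=
    mul_left_cancel₀ hω₀_pos.ne' (by rw [hK ω₀ hω₀_pos] at hroot; linear_combination -hroot)
  have hω_le : ω ≤ 2 * ω₀ := by linarith [hω.2, Real.rpow_le_self_of_one_le hω₀.le hq.2.le]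
  rw [hK ω hω_pos, mul_left_comm, mul_div_cancel_left₀ _ hω_pos.ne', hc', div_div]
  exact le_abs_mul_invSqIntegral_sub_one hω₀.le hroot' hω_pos hω_le

/-- Quantitative lower bound near the resonance frequency: if `ω₀ > 1` satisfies
`ω₀ = α K_sin(ω₀)` with `K_sin(ω) = ∫₀^∞ ω/(x²+ω²) dμ(x)` for a nonzero finite
positive measure `μ` on `[0,∞)`, then with `c = K_sin(1)/(4 μ([0,∞)))` one has
`c > 0` and, for every `q ∈ (0,1)` and every positive
`ω ∈ [ω₀ − ω₀^q, ω₀ + ω₀^q]`, `|α K_sin(ω)/ω − 1| ≥ (c/ω₀)|ω − ω₀|`. -/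
theorem lower_bound_near_resonance
    (μ : Measure ℝ) [IsFiniteMeasure μ] (hμ : μ (Ici 0) ≠ 0)
    (Ksin : ℝ → ℝ)
    (hKsin : ∀ ω : ℝ, 0 < ω → Ksin ω = ∫ x in Ici 0, ω / (x ^ 2 + ω ^ 2) ∂μ)
    (α : ℝ) (hα : 0 < α) (ω₀ : ℝ) (hω₀ : 1 < ω₀)
    (hroot : ω₀ = α * Ksin ω₀)
    (c : ℝ) (hc : c = Ksin 1 / (4 * (μ (Ici 0)).toReal)) :
    0 < c ∧
      ∀ q ∈ Set.Ioo (0:ℝ) 1, ∀ ω : ℝ,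
        ω ∈ Set.Icc (ω₀ - ω₀ ^ q) (ω₀ + ω₀ ^ q) → 0 < ω →
          (c / ω₀) * |ω - ω₀| ≤ |α * Ksin ω / ω - 1| :=
  lower_bound_near_resonance_general μ hμ Ksin hKsin α ω₀ hω₀ hroot c hc
end

section
/- Let μ be a nonzero finite positive measure on [0,∞) and α > 0. There exists r > 0 such that for all z = u − iv in the closed lower half-plane with v ≥ 0, (u,v) ≠ (0,0), |u| ≤ 1, |v| ≤ 1, and |z| < r, one has |α ∫₀^∞ 1/(iz+x) dμ(x) + iz| ≥ (α/(4√2)) ∫₀^∞ 1/(x+1) dμ(x) > 0. -/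
/-!
Put `w = i z = v + i u`, so `0 ≤ re w`, and `F = ∫ dμ(x) / (w + x)`. Pointwise,
`re (w + x)⁻¹ + |im (w + x)⁻¹| = (x + v + |u|) / |w + x|² ≥ 1 / (x + 1)`, and
`im (w + x)⁻¹ = -u / |w + x|²` has constant sign, so `re F + |im F| ≥ C := ∫ dμ(x) / (x + 1) > 0`.
For `ζ = α F + w` this gives `|re ζ| + |im ζ| ≥ α C - |u| ≥ α C / 4` once `|u| < 3 α C / 4`,
and `√2 ‖ζ‖ ≥ |re ζ| + |im ζ|`.
-/

open MeasureTheory Set Complex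

lemma abs_re_add_abs_im_le_sqrt_two_mul_norm (ζ : ℂ) : |ζ.re| + |ζ.im| ≤ √2 * ‖ζ‖ := by
  rw [← Real.sqrt_sq (norm_nonneg ζ), ← Real.sqrt_mul zero_le_two, Complex.sq_norm,
    Complex.normSq_apply]
  apply Real.le_sqrt_of_sq_le
  nlinarith [sq_abs ζ.re, sq_abs ζ.im, sq_nonneg (|ζ.re| - |ζ.im|)]

lemma one_div_le_re_inv_add_abs_im_inv {ξ : ℂ} {t : ℝ} (hξ : ξ ≠ 0) (hre : 0 ≤ ξ.re)
    (hre_le : ξ.re ≤ t) (him_le : |ξ.im| ≤ t) : 1 / t ≤ ξ⁻¹.re + |ξ⁻¹.im| := by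
  have hn : 0 < normSq ξ := normSq_pos.2 hξ
  have hn_eq : normSq ξ = ξ.re ^ 2 + |ξ.im| ^ 2 := by rw [normSq_apply, sq_abs]; ring
  have ht : 0 < t := by nlinarith [abs_nonneg ξ.im]
  rw [inv_re, inv_im, abs_div, abs_neg, abs_of_pos hn, ← add_div, div_le_div_iff₀ ht hn]
  nlinarith [abs_nonneg ξ.im]

lemma norm_le_norm_add_ofReal {w : ℂ} (hw : 0 ≤ w.re) {x : ℝ} (hx : 0 ≤ x) :
    ‖w‖ ≤ ‖w + x‖ := by
  rw [← sq_le_sq₀ (norm_nonneg _) (norm_nonneg _), Complex.sq_norm, Complex.sq_norm,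
    normSq_apply, normSq_apply]
  simp only [add_re, add_im, ofReal_re, ofReal_im, add_zero]
  nlinarith

lemma integrableOn_inv_add_ofReal (μ : Measure ℝ) [IsFiniteMeasure μ] {w : ℂ} (hw : 0 ≤ w.re)
    (hw0 : w ≠ 0) : IntegrableOn (fun x : ℝ => (w + x)⁻¹) (Ici 0) μ := by
  refine Measure.integrableOn_of_bounded (M := ‖w‖⁻¹) (measure_ne_top μ _)
    (measurable_ofReal.const_add w).inv.aestronglyMeasurable ?_
  filter_upwards [self_mem_ae_restrict measurableSet_Ici] with x hx
  rw [norm_inv]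
  exact inv_anti₀ (norm_pos_iff.2 hw0) (norm_le_norm_add_ofReal hw hx)

lemma abs_im_integral_inv_add_ofReal {ν : Measure ℝ} {w : ℂ}
    (hint : Integrable (fun x : ℝ => (w + x)⁻¹) ν) :
    |(∫ x, (w + x)⁻¹ ∂ν).im| = ∫ x, |((w + x)⁻¹).im| ∂ν := by
  have him : ∀ x : ℝ, ((w + x)⁻¹).im = -w.im * (normSq (w + x))⁻¹ := fun x => by
    simp [inv_im, div_eq_mul_inv]
  have him_int := integral_im hint
  simp only [RCLike.im_to_complex] at him_int
  rw [← him_int]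
  simp only [him, abs_mul, abs_inv, abs_of_nonneg (normSq_nonneg _),
    integral_const_mul]
  rw [abs_of_nonneg (integral_nonneg fun x => inv_nonneg.2 (normSq_nonneg _))]

lemma integrableOn_one_div_add_one (μ : Measure ℝ) [IsFiniteMeasure μ] :
    IntegrableOn (fun x : ℝ => 1 / (x + 1)) (Ici 0) μ := by
  refine Measure.integrableOn_of_bounded (M := 1) (measure_ne_top μ _)
    (by fun_prop : Measurable fun x : ℝ => 1 / (x + 1)).aestronglyMeasurable ?_
  filter_upwards [self_mem_ae_restrict measurableSet_Ici] with x (hx : 0 ≤ x)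
  rw [Real.norm_of_nonneg (by positivity), div_le_one (by linarith)]
  linarith

lemma setIntegral_one_div_add_one_pos {μ : Measure ℝ} [IsFiniteMeasure μ] (hμ : μ (Ici 0) ≠ 0) :
    0 < ∫ x in Ici 0, 1 / (x + 1) ∂μ := by
  have hpos : ∀ x ∈ Ici (0 : ℝ), 0 < 1 / (x + 1) := fun x (hx : 0 ≤ x) => by positivity
  have hsupp : Ici (0 : ℝ) ⊆ Function.support fun x : ℝ => 1 / (x + 1) :=
    fun x hx => (hpos x hx).ne'
  refine (setIntegral_pos_iff_support_of_nonneg_ae ?_ (integrableOn_one_div_add_one μ)).2 ?_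
  · filter_upwards [self_mem_ae_restrict measurableSet_Ici] with x hx using (hpos x hx).le
  · rwa [inter_eq_right.2 hsupp, pos_iff_ne_zero]

lemma setIntegral_one_div_add_one_le (μ : Measure ℝ) [IsFiniteMeasure μ] {w : ℂ}
    (hw0 : w ≠ 0) (hre : 0 ≤ w.re) (hre_le : w.re ≤ 1) (him_le : |w.im| ≤ 1) :
    ∫ x in Ici 0, 1 / (x + 1) ∂μ ≤
      (∫ x in Ici 0, (w + x)⁻¹ ∂μ).re + |(∫ x in Ici 0, (w + x)⁻¹ ∂μ).im| := by
  have hint := integrableOn_inv_add_ofReal μ hre hw0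
  have hre_int := integral_re hint
  simp only [RCLike.re_to_complex] at hre_int
  have hint_re : IntegrableOn (fun x : ℝ => ((w + x)⁻¹).re) (Ici 0) μ := hint.re
  have hint_im : IntegrableOn (fun x : ℝ => |((w + x)⁻¹).im|) (Ici 0) μ := hint.im.abs
  rw [abs_im_integral_inv_add_ofReal hint, ← hre_int, ← integral_add hint_re hint_im]
  refine setIntegral_mono_on (integrableOn_one_div_add_one μ) (hint_re.add hint_im)
    measurableSet_Ici fun x (hx : 0 ≤ x) => one_div_le_re_inv_add_abs_im_inv ?_ ?_ ?_ ?_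
  · exact norm_pos_iff.1 ((norm_pos_iff.2 hw0).trans_le (norm_le_norm_add_ofReal hre hx))
  · simp only [add_re, ofReal_re]; linarith
  · simp only [add_re, ofReal_re]; linarith
  · simpa using him_le.trans (by linarith)

lemma sub_abs_im_le_abs_re_add_abs_im_ofReal_mul_add {α : ℝ} (hα : 0 ≤ α) (F : ℂ) {w : ℂ}
    (hw : 0 ≤ w.re) : α * (F.re + |F.im|) - |w.im| ≤ |(α * F + w).re| + |(α * F + w).im| := by
  simp only [add_re, add_im, re_ofReal_mul, im_ofReal_mul]
  have hre := le_abs_self (α * F.re + w.re)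
  have him := abs_add_le (α * F.im + w.im) (-w.im)
  rw [add_neg_cancel_right, abs_neg, abs_mul, abs_of_nonneg hα] at him
  linarith

/-- For a nonzero finite positive measure `μ` on `[0,∞)` and `α > 0`, there is `r > 0`
so that for all `z = u − iv` in the closed lower half-plane minus the origin with
`|u| ≤ 1`, `|v| ≤ 1`, `|z| < r`, one has
`|α ∫₀^∞ 1/(iz+x) dμ(x) + iz| ≥ (α/(4√2)) ∫₀^∞ 1/(x+1) dμ(x) > 0`. -/
theorem denominator_bounded_below_near_origin
    (μ : Measure ℝ) [IsFiniteMeasure μ] (hμ : μ (Ici 0) ≠ 0)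
    (α : ℝ) (hα : 0 < α) :
    ∃ r : ℝ, 0 < r ∧
      (0 < α / (4 * Real.sqrt 2) * ∫ x in Ici 0, 1 / (x + 1) ∂μ) ∧
      ∀ u v : ℝ, 0 ≤ v → (u, v) ≠ (0, 0) → |u| ≤ 1 → |v| ≤ 1 →
        ‖(u : ℂ) - v * Complex.I‖ < r →
          α / (4 * Real.sqrt 2) * (∫ x in Ici 0, 1 / (x + 1) ∂μ)
            ≤ ‖
                ((α : ℂ) * (∫ x in Ici 0, 1 / (Complex.I * ((u : ℂ) - v * Complex.I) + x) ∂μ)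
                  + Complex.I * ((u : ℂ) - v * Complex.I))‖ := by
  set C := ∫ x in Ici 0, 1 / (x + 1) ∂μ
  have hC : 0 < C := setIntegral_one_div_add_one_pos hμ
  refine ⟨3 / 4 * (α * C), by positivity, by positivity, fun u v hv huv hu hv1 hz => ?_⟩
  set w := I * ((u : ℂ) - v * I)
  have hw_re : w.re = v := by simp [w]
  have hw_im : w.im = u := by simp [w]
  have hw0 : w ≠ 0 := fun h => huv (by simp [← hw_re, ← hw_im, h])
  have hu_lt : |u| < 3 / 4 * (α * C) := by
    simpa using (abs_re_le_norm ((u : ℂ) - v * I)).trans_lt hz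
  set F := ∫ x in Ici 0, (w + x)⁻¹ ∂μ
  have hw_re_nonneg : 0 ≤ w.re := hw_re ▸ hv
  have hC_le : C ≤ F.re + |F.im| :=
    setIntegral_one_div_add_one_le μ hw0 hw_re_nonneg (hw_re ▸ (abs_le.1 hv1).2) (hw_im ▸ hu)
  have hζ : α * C / 4 ≤ √2 * ‖α * F + w‖ := by
    have h₁ := sub_abs_im_le_abs_re_add_abs_im_ofReal_mul_add hα.le F hw_re_nonneg
    have h₂ := abs_re_add_abs_im_le_sqrt_two_mul_norm (α * F + w)
    rw [hw_im] at h₁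
    linarith [mul_le_mul_of_nonneg_left hC_le hα.le]
  simp only [one_div]
  rw [div_mul_eq_mul_div, div_le_iff₀ (by positivity)]
  linarith
end

section
/- Let μ be a nonzero finite positive measure on [0,∞), α ≥ 1, and let K_cos(ω) = ∫₀^∞ x/(x²+ω²) dμ(x), K_sin(ω) = ∫₀^∞ ω/(x²+ω²) dμ(x). Then for every β ∈ (0,1), the integral ∫₀^∞ ω^β K_cos(ω) / (α² K_cos(ω)² + (ω − α K_sin(ω))²) dω is finite. -/
/-!
Near `0` the integrand is at most `T ^ β / (α ^ 2 K_cos(T))`, because `K_cos` is antitone and the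
denominator is at least `α ^ 2 K_cos(ω) ^ 2`. If `K_cos(T) = 0`, then `K_cos` vanishes on `(0, T]`
by the comparison `K_cos(ω) ≤ (T / ω) ^ 2 K_cos(T)`, and so does the integrand. Near `∞`,
`K_cos(ω) ≤ μ[0,∞) / 2ω` and `K_sin(ω) ≤ μ[0,∞) / ω`, so for large `ω` the denominator is at least
`(ω / 2) ^ 2` and the integrand is `O(ω ^ (β - 3))`.
-/

open MeasureTheory Set

/-- `K_cos` and `K_sin` of the paper. -/
noncomputable def cosTransform (μ : Measure ℝ) (ω : ℝ) : ℝ :=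
  ∫ x in Ici 0, x / (x ^ 2 + ω ^ 2) ∂μ

noncomputable def sinTransform (μ : Measure ℝ) (ω : ℝ) : ℝ :=
  ∫ x in Ici 0, ω / (x ^ 2 + ω ^ 2) ∂μ

lemma norm_div_sq_add_sq_le {x ω : ℝ} (hω : 0 < ω) : ‖x / (x ^ 2 + ω ^ 2)‖ ≤ 1 / (2 * ω) := by
  have hd : 0 < x ^ 2 + ω ^ 2 := by positivity
  rw [Real.norm_eq_abs, abs_div, abs_of_pos hd, div_le_div_iff₀ hd (by positivity)]
  nlinarith [sq_nonneg (|x| - ω), sq_abs x]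

lemma norm_self_div_sq_add_sq_le {x ω : ℝ} (hω : 0 < ω) : ‖ω / (x ^ 2 + ω ^ 2)‖ ≤ 1 / ω := by
  have hd : 0 < x ^ 2 + ω ^ 2 := by positivity
  rw [Real.norm_eq_abs, abs_div, abs_of_pos hd, abs_of_pos hω, div_le_div_iff₀ hd hω]
  nlinarith [sq_nonneg x]

section Transforms

variable (μ : Measure ℝ)

@[fun_prop]
lemma measurable_cosTransform [SFinite μ] : Measurable (cosTransform μ) :=
  (measurable_snd.div ((measurable_snd.pow_const 2).add
    (measurable_fst.pow_const 2))).stronglyMeasurable.integral_prod_right'.measurable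

@[fun_prop]
lemma measurable_sinTransform [SFinite μ] : Measurable (sinTransform μ) :=
  (measurable_fst.div ((measurable_snd.pow_const 2).add
    (measurable_fst.pow_const 2))).stronglyMeasurable.integral_prod_right'.measurable

lemma cosTransform_nonneg (ω : ℝ) : 0 ≤ cosTransform μ ω :=
  setIntegral_nonneg measurableSet_Ici fun x hx => div_nonneg hx (by positivity)

variable [IsFiniteMeasure μ] {ω : ℝ}

lemma cosTransform_le (hω : 0 < ω) : cosTransform μ ω ≤ μ.real (Ici 0) / (2 * ω) :=
  calc cosTransform μ ω ≤ ‖cosTransform μ ω‖ := le_abs_self _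
    _ ≤ 1 / (2 * ω) * μ.real (Ici 0) :=
      norm_setIntegral_le_of_norm_le_const (measure_lt_top _ _)
        fun _ _ => norm_div_sq_add_sq_le hω
    _ = μ.real (Ici 0) / (2 * ω) := by ring

lemma sinTransform_le (hω : 0 < ω) : sinTransform μ ω ≤ μ.real (Ici 0) / ω :=
  calc sinTransform μ ω ≤ ‖sinTransform μ ω‖ := le_abs_self _
    _ ≤ 1 / ω * μ.real (Ici 0) :=
      norm_setIntegral_le_of_norm_le_const (measure_lt_top _ _)
        fun _ _ => norm_self_div_sq_add_sq_le hω
    _ = μ.real (Ici 0) / ω := by ring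

lemma integrable_div_sq_add_sq (hω : 0 < ω) :
    Integrable (fun x : ℝ => x / (x ^ 2 + ω ^ 2)) μ :=
  .of_bound (by fun_prop : Measurable _).aestronglyMeasurable _
    (.of_forall fun _ => norm_div_sq_add_sq_le hω)

lemma antitoneOn_cosTransform : AntitoneOn (cosTransform μ) (Ioi 0) :=
  fun ω (hω : 0 < ω) T (hT : 0 < T) hωT =>
    setIntegral_mono_on (integrable_div_sq_add_sq μ hT).integrableOn
      (integrable_div_sq_add_sq μ hω).integrableOn measurableSet_Ici fun x (hx : 0 ≤ x) =>
        div_le_div_of_nonneg_left hx (by positivity) (by gcongr)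

variable {T : ℝ}

lemma cosTransform_le_sq_div_mul (hω : 0 < ω) (hωT : ω ≤ T) :
    cosTransform μ ω ≤ (T / ω) ^ 2 * cosTransform μ T := by
  rw [cosTransform, cosTransform, ← integral_const_mul]
  refine setIntegral_mono_on (integrable_div_sq_add_sq μ hω).integrableOn
    ((integrable_div_sq_add_sq μ (hω.trans_le hωT)).const_mul _).integrableOn
    measurableSet_Ici fun x (hx : 0 ≤ x) => ?_
  have hT : 0 < T := hω.trans_le hωT
  rw [div_pow, div_mul_div_comm, div_le_div_iff₀ (by positivity) (by positivity)]
  have : ω ^ 2 ≤ T ^ 2 := by gcongr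
  nlinarith [pow_nonneg hx 3]

end Transforms

section Integrand

variable {a k s ω β : ℝ}

-- For `k₀ = 0` the bound is `0`, since `x / 0 = 0`.
lemma rpow_mul_div_le_of_le {k₀ T : ℝ} (ha : a ≠ 0) (hω : 0 < ω) (hωT : ω ≤ T) (hβ : 0 ≤ β)
    (hk₀ : 0 ≤ k₀) (hk : k₀ ≤ k) (hk_zero : k₀ = 0 → k = 0) :
    ω ^ β * k / (a ^ 2 * k ^ 2 + (ω - a * s) ^ 2) ≤ T ^ β / (a ^ 2 * k₀) := by
  obtain rfl | hk₀ := hk₀.eq_or_lt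
  · simp [hk_zero rfl]
  have hk : 0 < k := hk₀.trans_le hk
  have hT : 0 < T := hω.trans_le hωT
  calc ω ^ β * k / (a ^ 2 * k ^ 2 + (ω - a * s) ^ 2) ≤ ω ^ β * k / (a ^ 2 * k ^ 2) := by
        gcongr
        exact le_add_of_nonneg_right (sq_nonneg _)
    _ = ω ^ β / (a ^ 2 * k) := by field_simp
    _ ≤ T ^ β / (a ^ 2 * k₀) := by gcongr

lemma rpow_mul_div_le_rpow_sub_three {C : ℝ} (hω : 0 < ω) (hk : 0 ≤ k) (hkC : k ≤ C / (2 * ω))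
    (hs : a * s ≤ ω / 2) :
    ω ^ β * k / (a ^ 2 * k ^ 2 + (ω - a * s) ^ 2) ≤ 2 * C * ω ^ (β - 3) := by
  have hC : 0 ≤ C / (2 * ω) := hk.trans hkC
  calc ω ^ β * k / (a ^ 2 * k ^ 2 + (ω - a * s) ^ 2) ≤ ω ^ β * (C / (2 * ω)) / (ω / 2) ^ 2 := by
        gcongr
        nlinarith [sq_nonneg (a * k)]
    _ = 2 * C * ω ^ (β - 3) := by
        rw [Real.rpow_sub hω, Real.rpow_ofNat]
        field_simp

end Integrand

lemma integrableOn_Ioi_of_le_of_le_rpow {f : ℝ → ℝ} {a T M C γ : ℝ}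
    (hf : AEStronglyMeasurable f (volume.restrict (Ioi a))) (haT : a ≤ T) (hT : 0 < T)
    (hγ : γ < -1) (h_near : ∀ ω ∈ Ioc a T, ‖f ω‖ ≤ M)
    (h_tail : ∀ ω ∈ Ioi T, ‖f ω‖ ≤ C * ω ^ γ) : IntegrableOn f (Ioi a) := by
  rw [← Ioc_union_Ioi_eq_Ioi haT] at hf ⊢
  refine IntegrableOn.union ?_ ?_
  · exact .of_bound measure_Ioc_lt_top
      (hf.mono_measure (Measure.restrict_mono subset_union_left le_rfl)) M
      ((ae_restrict_iff' measurableSet_Ioc).2 (.of_forall h_near))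
  · exact ((integrableOn_Ioi_rpow_of_lt hγ hT).const_mul C).mono'
      (hf.mono_measure (Measure.restrict_mono subset_union_right le_rfl))
      ((ae_restrict_iff' measurableSet_Ioi).2 (.of_forall h_tail))

theorem weighted_spectral_integral_finite_general
    (μ : Measure ℝ) [IsFiniteMeasure μ]
    (α : ℝ) (hα : 1 ≤ α)
    (Kcos Ksin : ℝ → ℝ)
    (hKcos : ∀ ω : ℝ, 0 < ω → Kcos ω = ∫ x in Ici 0, x / (x ^ 2 + ω ^ 2) ∂μ)
    (hKsin : ∀ ω : ℝ, 0 < ω → Ksin ω = ∫ x in Ici 0, ω / (x ^ 2 + ω ^ 2) ∂μ)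
    (β : ℝ) (hβ : β ∈ Set.Ioo (0:ℝ) 1) :
    IntegrableOn
      (fun ω : ℝ =>
        ω ^ β * Kcos ω / (α ^ 2 * Kcos ω ^ 2 + (ω - α * Ksin ω) ^ 2))
      (Ioi 0) := by
  rw [integrableOn_congr_fun (g := fun ω => ω ^ β * cosTransform μ ω /
      (α ^ 2 * cosTransform μ ω ^ 2 + (ω - α * sinTransform μ ω) ^ 2))
    (fun ω hω => by simp only [hKcos ω hω, hKsin ω hω]; rfl) measurableSet_Ioi]
  set C := μ.real (Ici 0)
  -- for `ω > T` we have `2 α C ≤ ω ^ 2`, hence `α K_sin(ω) ≤ ω / 2`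
  set T := 1 + 2 * α * C
  have hT : 0 < T := by positivity
  refine integrableOn_Ioi_of_le_of_le_rpow (M := T ^ β / (α ^ 2 * cosTransform μ T)) (C := 2 * C)
    (γ := β - 3) (by fun_prop : Measurable _).aestronglyMeasurable hT.le hT (by linarith [hβ.2])
    (fun ω ⟨hω, hωT⟩ => ?_) (fun ω (hωT : T < ω) => ?_)
  · have h_zero (h : cosTransform μ T = 0) : cosTransform μ ω = 0 :=
      ((cosTransform_le_sq_div_mul μ hω hωT).trans_eq (by rw [h, mul_zero])).antisymm
        (cosTransform_nonneg μ ω)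
    rw [Real.norm_of_nonneg (by have := cosTransform_nonneg μ ω; positivity)]
    exact rpow_mul_div_le_of_le (by positivity) hω hωT hβ.1.le (cosTransform_nonneg μ T)
      (antitoneOn_cosTransform μ hω (hω.trans_le hωT) hωT) h_zero
  · have hω : 0 < ω := hT.trans hωT
    have hs : α * sinTransform μ ω ≤ ω / 2 :=
      calc α * sinTransform μ ω ≤ α * (C / ω) := by gcongr; exact sinTransform_le μ hω
        _ ≤ ω / 2 := by
          rw [mul_div_assoc', div_le_div_iff₀ hω two_pos]
          nlinarith
    rw [Real.norm_of_nonneg (by have := cosTransform_nonneg μ ω; positivity)]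
    exact rpow_mul_div_le_rpow_sub_three hω (cosTransform_nonneg μ ω) (cosTransform_le μ hω) hs

/-- For a nonzero finite positive measure `μ` on `[0,∞)`, `α ≥ 1`, and every
`β ∈ (0,1)`, the integral
`∫₀^∞ ω^β K_cos(ω) / (α² K_cos(ω)² + (ω − α K_sin(ω))²) dω` is finite, where
`K_cos(ω) = ∫₀^∞ x/(x²+ω²) dμ(x)` and `K_sin(ω) = ∫₀^∞ ω/(x²+ω²) dμ(x)`. -/
theorem weighted_spectral_integral_finite
    (μ : Measure ℝ) [IsFiniteMeasure μ] (hμ : μ (Ici 0) ≠ 0)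
    (α : ℝ) (hα : 1 ≤ α)
    (Kcos Ksin : ℝ → ℝ)
    (hKcos : ∀ ω : ℝ, 0 < ω → Kcos ω = ∫ x in Ici 0, x / (x ^ 2 + ω ^ 2) ∂μ)
    (hKsin : ∀ ω : ℝ, 0 < ω → Ksin ω = ∫ x in Ici 0, ω / (x ^ 2 + ω ^ 2) ∂μ)
    (β : ℝ) (hβ : β ∈ Set.Ioo (0:ℝ) 1) :
    IntegrableOn
      (fun ω : ℝ =>
        ω ^ β * Kcos ω / (α ^ 2 * Kcos ω ^ 2 + (ω - α * Ksin ω) ^ 2))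
      (Ioi 0) :=
  weighted_spectral_integral_finite_general μ α hα Kcos Ksin hKcos hKsin β hβ
end
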